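/- arXiv:math/0306249 — 6 statements merged into one kernel-verified Lean document; each statement's English description precedes it below -/
import Mathlib

section
/- Let d ≥ 1, let n₁ be a positive integer and b = (b₁,…,b_d) ∈ ℕ^d. Then: (i) the set {κ ∈ ℝ_{≥0}^{d+1} : b₁κ₁ + … + b_dκ_d = n₁κ_{d+1}} equals the set of all nonnegative real linear combinations {λ₁w₁ + … + λ_dw_d : λ₁,…,λ_d ∈ ℝ_{≥0}}; (ii) the vectors w₁,…,w_d are linearly independent over ℝ; (iii) each w_l is primitive, i.e. the gcd of its two nonzero entries n₁/c_l and b_l/c_l is 1. -/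
/-- For a positive integer `n₁` and `b ∈ ℕ^d`, with `c l = gcd n₁ (b l)` and
`w l = (n₁/c l)·e l + (b l/c l)·e_{d+1} ∈ ℕ^{d+1}`:
(i) the cone `{κ ∈ ℝ₊^{d+1} : Σ b l κ l = n₁ κ_{d+1}}` is the set of nonnegative
combinations of the `w l`; (ii) the `w l` are linearly independent over `ℝ`;
(iii) each `w l` is primitive. -/
theorem stmt0 (d : ℕ) (hd : 1 ≤ d) (n₁ : ℕ) (hn₁ : 0 < n₁) (b : Fin d → ℕ)
    (c : Fin d → ℕ) (hc : ∀ l, c l = Nat.gcd n₁ (b l))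
    (w : Fin d → Fin (d + 1) → ℕ)
    (hw : ∀ l, w l = fun i => if i = Fin.castSucc l then n₁ / c l
        else if i = Fin.last d then b l / c l else 0) :
    ({κ : Fin (d + 1) → ℝ | (∀ i, 0 ≤ κ i) ∧
        ∑ l : Fin d, (b l : ℝ) * κ (Fin.castSucc l) = (n₁ : ℝ) * κ (Fin.last d)}
      = {v : Fin (d + 1) → ℝ | ∃ lam : Fin d → ℝ, (∀ l, 0 ≤ lam l) ∧
          v = ∑ l : Fin d, lam l • (fun i => (w l i : ℝ))})
    ∧ LinearIndependent ℝ (fun l : Fin d => (fun i => (w l i : ℝ) : Fin (d + 1) → ℝ))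
    ∧ (∀ l, Nat.gcd (n₁ / c l) (b l / c l) = 1) := by
  have hcpos : ∀ l, 0 < c l := fun l => by
    rw [hc]; exact Nat.gcd_pos_of_pos_left _ hn₁
  have hdn : ∀ l, c l ∣ n₁ := fun l => hc l ▸ Nat.gcd_dvd_left _ _
  have hdb : ∀ l, c l ∣ b l := fun l => hc l ▸ Nat.gcd_dvd_right _ _
  have hcne : ∀ l, (c l : ℝ) ≠ 0 := fun l => Nat.cast_ne_zero.mpr (hcpos l).ne'
  have hnR : ∀ l, ((n₁ / c l : ℕ) : ℝ) = (n₁ : ℝ) / c l := fun l =>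
    Nat.cast_div (hdn l) (hcne l)
  have hbR : ∀ l, ((b l / c l : ℕ) : ℝ) = (b l : ℝ) / c l := fun l =>
    Nat.cast_div (hdb l) (hcne l)
  have hnpos : (0:ℝ) < n₁ := Nat.cast_pos.mpr hn₁
  have hwR : ∀ l i, ((w l i : ℕ) : ℝ) = if i = Fin.castSucc l then (n₁:ℝ)/c l
      else if i = Fin.last d then (b l:ℝ)/c l else 0 := by
    intro l i
    simp only [hw l]
    split_ifs <;> simp [hnR, hbR]
  have hsum : ∀ (g : Fin d → ℝ) (i : Fin (d+1)),
      (∑ l, g l • (fun i => (w l i : ℝ))) i = ∑ l, g l * ((w l i : ℕ) : ℝ) := by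
    intro g i; simp [Finset.sum_apply]
  have evalCast : ∀ (g : Fin d → ℝ) (l₀ : Fin d),
      ∑ l, g l * ((w l (Fin.castSucc l₀) : ℕ) : ℝ) = g l₀ * ((n₁:ℝ)/c l₀) := by
    intro g l₀
    rw [Finset.sum_eq_single l₀]
    · rw [hwR]; simp
    · intro l _ hne
      rw [hwR, if_neg, if_neg]
      · ring
      · exact (Fin.castSucc_lt_last l₀).ne
      · exact fun h => hne (Fin.castSucc_injective _ h).symm
    · intro h; exact absurd (Finset.mem_univ l₀) h
  have evalLast : ∀ (g : Fin d → ℝ),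
      ∑ l, g l * ((w l (Fin.last d) : ℕ) : ℝ) = ∑ l, g l * ((b l:ℝ)/c l) := by
    intro g
    refine Finset.sum_congr rfl fun l _ => ?_
    rw [hwR, if_neg (Fin.castSucc_lt_last l).ne', if_pos rfl]
  refine ⟨?_, ?_, ?_⟩
  · ext κ
    simp only [Set.mem_setOf_eq]
    constructor
    · rintro ⟨h1, h2⟩
      refine ⟨fun l => κ (Fin.castSucc l) * c l / n₁, fun l => ?_, ?_⟩
      · exact div_nonneg (mul_nonneg (h1 _) (Nat.cast_nonneg _)) hnpos.le
      · funext i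
        rcases Fin.eq_castSucc_or_eq_last i with ⟨j, rfl⟩ | rfl
        · rw [hsum, evalCast]
          field_simp
          rw [mul_div_assoc, div_self (hcne j), mul_one]
        · rw [hsum, evalLast]
          have : ∀ l : Fin d, κ (Fin.castSucc l) * c l / n₁ * ((b l:ℝ)/c l)
              = (b l : ℝ) * κ (Fin.castSucc l) / n₁ := by
            intro l
            have t1 := hcne l
            have t2 : (n₁:ℝ) ≠ 0 := hnpos.ne'
            field_simp
          rw [Finset.sum_congr rfl fun l _ => this l, ← Finset.sum_div, h2]
          field_simp
    · rintro ⟨lam, hlam, rfl⟩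
      constructor
      · intro i
        rw [hsum]
        exact Finset.sum_nonneg fun l _ => mul_nonneg (hlam l) (Nat.cast_nonneg _)
      · have hl : ∀ l : Fin d, (∑ m, lam m • (fun i => (w m i : ℝ))) (Fin.castSucc l)
            = lam l * ((n₁:ℝ)/c l) := fun l => by rw [hsum, evalCast]
        rw [hsum, evalLast]
        calc ∑ l, (b l : ℝ) * (∑ m, lam m • (fun i => (w m i : ℝ))) (Fin.castSucc l)
            = ∑ l, (n₁:ℝ) * (lam l * ((b l:ℝ)/c l)) := by
              refine Finset.sum_congr rfl fun l _ => ?_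
              rw [hl l]; field_simp
          _ = (n₁:ℝ) * ∑ l, lam l * ((b l:ℝ)/c l) := by rw [Finset.mul_sum]
  · rw [Fintype.linearIndependent_iff]
    intro g hg l
    have := congrFun hg (Fin.castSucc l)
    rw [hsum, evalCast] at this
    simp only [Pi.zero_apply] at this
    rcases mul_eq_zero.mp this with h | h
    · exact h
    · exact absurd h (div_ne_zero hnpos.ne' (hcne l))
  · intro l
    have := Nat.coprime_div_gcd_div_gcd (m := n₁) (n := b l) (hc l ▸ hcpos l)
    rwa [Nat.Coprime, ← hc l] at this
end

section
/- Let d ≥ 1, let n₁ be a positive integer and b = (b₁,…,b_d) ∈ ℕ^d. Then the number of integer points of ℤ^{d+1} lying in the half-open parallelepiped {μ₁w₁ + … + μ_dw_d + μ_{d+1}e_{d+1} : μ_j ∈ ℝ, 0 < μ_j ≤ 1 for all j}, multiplied by ∏_{l=1}^d c_l, equals n₁^d. -/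
/-- With `c l = gcd n₁ (b l)` and `w l = (n₁/c l)·e l + (b l/c l)·e_{d+1}`,
the number of points of `ℤ^{d+1}` in the half-open parallelepiped
`{μ₁ w₁ + … + μ_d w_d + μ_{d+1} e_{d+1} : 0 < μ_j ≤ 1}`, multiplied by `∏ c l`,
equals `n₁^d`. -/
theorem stmt2 (d : ℕ) (hd : 1 ≤ d) (n₁ : ℕ) (hn₁ : 0 < n₁) (b : Fin d → ℕ)
    (c : Fin d → ℕ) (hc : ∀ l, c l = Nat.gcd n₁ (b l))
    (w : Fin d → Fin (d + 1) → ℕ)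
    (hw : ∀ l, w l = fun i => if i = Fin.castSucc l then n₁ / c l
        else if i = Fin.last d then b l / c l else 0)
    (S : Set (Fin (d + 1) → ℤ))
    (hS : S = {v : Fin (d + 1) → ℤ | ∃ μ : Fin (d + 1) → ℝ,
        (∀ j, 0 < μ j ∧ μ j ≤ 1) ∧
        (fun i => (v i : ℝ)) =
          (∑ l : Fin d, μ (Fin.castSucc l) • (fun i => (w l i : ℝ)))
            + μ (Fin.last d) • (fun i => if i = Fin.last d then (1 : ℝ) else 0)}) :
    S.Finite ∧ S.ncard * ∏ l : Fin d, c l = n₁ ^ d := by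
  have hcd : ∀ l, c l ∣ n₁ := fun l => (hc l) ▸ Nat.gcd_dvd_left n₁ (b l)
  have hcpos : ∀ l, 0 < c l := fun l => (hc l) ▸ Nat.gcd_pos_of_pos_left _ hn₁
  have hmpos : ∀ l, 0 < n₁ / c l := fun l =>
    Nat.div_pos (Nat.le_of_dvd hn₁ (hcd l)) (hcpos l)
  have hmR : ∀ l, (0:ℝ) < ((n₁ / c l : ℕ) : ℝ) := fun l => by exact_mod_cast hmpos l
  -- evaluation of the RHS at castSucc l
  have hR1 : ∀ (μ : Fin (d+1) → ℝ) (l : Fin d),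
      ((∑ l' : Fin d, μ (Fin.castSucc l') • (fun i => ((w l' i : ℕ) : ℝ)))
          + μ (Fin.last d) • (fun i => if i = Fin.last d then (1:ℝ) else 0)) (Fin.castSucc l)
      = μ (Fin.castSucc l) * ((n₁ / c l : ℕ) : ℝ) := by
    intro μ l
    have hne : Fin.castSucc l ≠ Fin.last d := (Fin.castSucc_lt_last l).ne
    simp only [Pi.add_apply, Finset.sum_apply, Pi.smul_apply, smul_eq_mul, hw]
    rw [if_neg hne, mul_zero, add_zero]
    rw [Finset.sum_eq_single l]
    · simp
    · intro l' _ hne'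
      have h2 : Fin.castSucc l ≠ Fin.castSucc l' := by
        simpa [Fin.castSucc_inj] using (Ne.symm hne')
      rw [if_neg h2, if_neg hne, Nat.cast_zero, mul_zero]
    · simp
  -- evaluation at last
  have hR2 : ∀ (μ : Fin (d+1) → ℝ),
      ((∑ l' : Fin d, μ (Fin.castSucc l') • (fun i => ((w l' i : ℕ) : ℝ)))
          + μ (Fin.last d) • (fun i => if i = Fin.last d then (1:ℝ) else 0)) (Fin.last d)
      = (∑ l : Fin d, μ (Fin.castSucc l) * ((b l / c l : ℕ) : ℝ)) + μ (Fin.last d) := by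
    intro μ
    have hne : ∀ l : Fin d, Fin.last d ≠ Fin.castSucc l := fun l => (Fin.castSucc_lt_last l).ne'
    simp only [Pi.add_apply, Finset.sum_apply, Pi.smul_apply, smul_eq_mul, hw]
    simp [hne]
  set x : (Fin d → ℤ) → ℝ :=
    fun u => ∑ l, (u l : ℝ) * ((b l / c l : ℕ) : ℝ) / ((n₁ / c l : ℕ) : ℝ) with hx
  set F : (Fin d → ℤ) → (Fin (d+1) → ℤ) := fun u => Fin.snoc u (⌊x u⌋ + 1) with hF
  set B : Set (Fin d → ℤ) := Set.univ.pi (fun l => Set.Icc 1 ((n₁ / c l : ℕ) : ℤ)) with hB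
  have hFinj : Function.Injective F := by
    intro u u' h
    funext l
    have := congrFun h (Fin.castSucc l)
    simpa [hF, Fin.snoc_castSucc] using this
  have hSeq : S = F '' B := by
    rw [hS]
    ext v
    simp only [Set.mem_setOf_eq, Set.mem_image]
    constructor
    · rintro ⟨μ, hμ, heq⟩
      refine ⟨fun l => v (Fin.castSucc l), ?_, ?_⟩
      · intro l _
        simp only [Set.mem_Icc]
        have h1 : (v (Fin.castSucc l) : ℝ) = μ (Fin.castSucc l) * ((n₁ / c l : ℕ) : ℝ) :=
          (congrFun heq (Fin.castSucc l)).trans (hR1 μ l)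
        constructor
        · have : (0:ℝ) < (v (Fin.castSucc l) : ℝ) := by
            rw [h1]; exact mul_pos (hμ _).1 (hmR l)
          exact_mod_cast this
        · have hle : (v (Fin.castSucc l) : ℝ) ≤ ((((n₁ / c l : ℕ) : ℤ)) : ℝ) := by
            push_cast
            rw [h1]
            calc μ (Fin.castSucc l) * ((n₁ / c l : ℕ) : ℝ)
                ≤ 1 * ((n₁ / c l : ℕ) : ℝ) :=
                  mul_le_mul_of_nonneg_right (hμ _).2 (hmR l).le
              _ = _ := one_mul _
          exact Int.cast_le.mp hle
      · -- F u = v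
        have hμval : ∀ l, μ (Fin.castSucc l) = (v (Fin.castSucc l) : ℝ) / ((n₁ / c l : ℕ) : ℝ) := by
          intro l
          have h1 : (v (Fin.castSucc l) : ℝ) = μ (Fin.castSucc l) * ((n₁ / c l : ℕ) : ℝ) :=
            (congrFun heq (Fin.castSucc l)).trans (hR1 μ l)
          field_simp [h1, (hmR l).ne']
          exact h1.symm
        have hxu : x (fun l => v (Fin.castSucc l)) = ∑ l, μ (Fin.castSucc l) * ((b l / c l : ℕ) : ℝ) := by
          rw [hx]
          refine Finset.sum_congr rfl fun l _ => ?_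
          rw [hμval l]
          ring
        have h2 : (v (Fin.last d) : ℝ)
            = x (fun l => v (Fin.castSucc l)) + μ (Fin.last d) := by
          rw [hxu]
          exact (congrFun heq (Fin.last d)).trans (hR2 μ)
        have hfloor : ⌊x (fun l => v (Fin.castSucc l))⌋ = v (Fin.last d) - 1 := by
          rw [Int.floor_eq_iff]
          constructor
          · push_cast
            have := (hμ (Fin.last d)).2
            linarith [h2]
          · push_cast
            have := (hμ (Fin.last d)).1
            linarith [h2]
        funext i
        refine Fin.lastCases ?_ ?_ i
        · rw [hF]
          simp only [Fin.snoc_last]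
          rw [hfloor]; ring
        · intro l
          rw [hF]
          simp [Fin.snoc_castSucc]
    · rintro ⟨u, hu, rfl⟩
      simp only [hB, Set.mem_pi, Set.mem_univ, forall_true_left, Set.mem_Icc] at hu
      set μ : Fin (d+1) → ℝ :=
        Fin.snoc (fun l => (u l : ℝ) / ((n₁ / c l : ℕ) : ℝ)) ((⌊x u⌋ : ℝ) + 1 - x u) with hμdef
      have hμc : ∀ l, μ (Fin.castSucc l) = (u l : ℝ) / ((n₁ / c l : ℕ) : ℝ) := by
        intro l; rw [hμdef]; simp [Fin.snoc_castSucc]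
      have hμl : μ (Fin.last d) = (⌊x u⌋ : ℝ) + 1 - x u := by
        rw [hμdef]; simp [Fin.snoc_last]
      refine ⟨μ, ?_, ?_⟩
      · intro j
        refine Fin.lastCases ?_ ?_ j
        · rw [hμl]
          constructor
          · linarith [Int.lt_floor_add_one (x u)]
          · linarith [Int.floor_le (x u)]
        · intro l
          rw [hμc l]
          have h1 : (1:ℝ) ≤ (u l : ℝ) := by
            have h := (Int.cast_le (R := ℝ)).mpr (hu l).1
            rwa [Int.cast_one] at h
          have h2 : (u l : ℝ) ≤ ((n₁ / c l : ℕ) : ℝ) := by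
            have h := (Int.cast_le (R := ℝ)).mpr (hu l).2
            rwa [Int.cast_natCast] at h
          constructor
          · exact div_pos (by linarith) (hmR l)
          · rw [div_le_one (hmR l)]; exact h2
      · funext i
        refine Fin.lastCases ?_ ?_ i
        · rw [hR2 μ, hμl]
          have hsum : (∑ l : Fin d, μ (Fin.castSucc l) * ((b l / c l : ℕ) : ℝ)) = x u := by
            rw [hx]
            refine Finset.sum_congr rfl fun l _ => ?_
            rw [hμc l]; ring
          rw [hsum]
          have : F u (Fin.last d) = ⌊x u⌋ + 1 := by rw [hF]; simp [Fin.snoc_last]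
          rw [this]
          push_cast
          ring
        · intro l
          rw [hR1 μ l, hμc l]
          have : F u (Fin.castSucc l) = u l := by rw [hF]; simp [Fin.snoc_castSucc]
          rw [this, div_mul_cancel₀]
          exact (hmR l).ne'
  have hBfin : B.Finite := Set.Finite.pi (fun l => Set.finite_Icc _ _)
  have hSfin : S.Finite := hSeq ▸ hBfin.image F
  refine ⟨hSfin, ?_⟩
  have hBcard : B.ncard = ∏ l : Fin d, (n₁ / c l) := by
    have hBe : B = ↑(Fintype.piFinset fun l => Finset.Icc (1:ℤ) ((n₁ / c l : ℕ) : ℤ)) := by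
      ext u
      simp [hB, Fintype.mem_piFinset, Set.mem_pi]
    rw [hBe, Set.ncard_coe_finset, Fintype.card_piFinset]
    refine Finset.prod_congr rfl fun l _ => ?_
    rw [Int.card_Icc, add_sub_cancel_right, Int.toNat_natCast]
  rw [hSeq, Set.ncard_image_of_injective _ hFinj, hBcard, ← Finset.prod_mul_distrib]
  have : ∀ l : Fin d, n₁ / c l * c l = n₁ := fun l => Nat.div_mul_cancel (hcd l)
  simp only [this, Finset.prod_const, Finset.card_univ, Fintype.card_fin]
end

section
/- Let d ≥ 1, let n₁ be a positive integer and b = (b₁,…,b_d) ∈ ℕ^d with gcd(n₁, b₁, …, b_d) = 1. Then the number of integer points of ℤ^{d+1} lying in the half-open parallelepiped {μ₁w₁ + … + μ_dw_d : μ_l ∈ ℝ, 0 < μ_l ≤ 1 for all l}, multiplied by ∏_{l=1}^d c_l, equals n₁^{d−1}. -/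
private lemma bezout_finset {ι : Type*} [DecidableEq ι] (n : ℕ) (b : ι → ℕ) (s : Finset ι) :
    ∃ (v : ι → ℤ) (t : ℤ), ∑ l ∈ s, v l * b l + t * n = Nat.gcd n (s.gcd b) := by
  induction s using Finset.induction with
  | empty => exact ⟨0, 1, by simp⟩
  | @insert a s ha ih =>
    obtain ⟨v, t, hvt⟩ := ih
    have hgi : (insert a s).gcd b = Nat.gcd (b a) (s.gcd b) := Finset.gcd_insert
    have hassoc : Nat.gcd n ((insert a s).gcd b)
        = Nat.gcd (b a) (Nat.gcd n (s.gcd b)) := by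
      rw [hgi, ← Nat.gcd_assoc, Nat.gcd_comm n (b a), Nat.gcd_assoc]
    set G := Nat.gcd n (s.gcd b) with hG
    set X := Nat.gcdA (b a) G
    set Y := Nat.gcdB (b a) G
    have hbez : (Nat.gcd (b a) G : ℤ) = b a * X + G * Y := Nat.gcd_eq_gcd_ab (b a) G
    refine ⟨fun l => if l = a then X else Y * v l, Y * t, ?_⟩
    rw [Finset.sum_insert ha, hassoc]
    beta_reduce
    have hs : ∑ l ∈ s, (if l = a then X else Y * v l) * (b l : ℤ)
        = Y * ∑ l ∈ s, v l * b l := by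
      rw [Finset.mul_sum]
      refine Finset.sum_congr rfl fun l hl => ?_
      rw [if_neg (by rintro rfl; exact ha hl)]; ring
    simp only [if_pos rfl, if_true, hs]
    rw [hbez]
    have hG' : (G : ℤ) = ∑ l ∈ s, v l * b l + t * n := hvt.symm
    rw [hG']; ring

private lemma ker_count (d n : ℕ) (hn : 0 < n) (hd : 1 ≤ d) (b : Fin d → ℕ)
    (hgcd : Nat.gcd n (Finset.univ.gcd b) = 1) :
    Nat.card {x : Fin d → ZMod n | ∑ l, x l * (b l : ZMod n) = 0} = n ^ (d - 1) := by
  haveI : NeZero n := ⟨hn.ne'⟩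
  set f : (Fin d → ZMod n) →+ ZMod n :=
    AddMonoidHom.mk' (fun x => ∑ l, x l * (b l : ZMod n))
      (by intro x y; simp [add_mul, Finset.sum_add_distrib]) with hf
  have hsurj : Function.Surjective f := by
    obtain ⟨v, t, hvt⟩ := bezout_finset n b Finset.univ
    rw [hgcd] at hvt
    have h1 : ∑ l, ((v l : ZMod n) * (b l : ZMod n)) = 1 := by
      have := congrArg (fun z : ℤ => (z : ZMod n)) hvt
      push_cast at this
      simpa [ZMod.natCast_self] using this
    intro y
    refine ⟨fun l => y * (v l : ZMod n), ?_⟩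
    simp only [hf, AddMonoidHom.mk'_apply]
    rw [show ∑ l, y * (v l : ZMod n) * (b l : ZMod n) = y * ∑ l, (v l : ZMod n) * (b l : ZMod n)
      by rw [Finset.mul_sum]; exact Finset.sum_congr rfl fun l _ => by ring, h1, mul_one]
  have hkerset : {x : Fin d → ZMod n | ∑ l, x l * (b l : ZMod n) = 0} = (f.ker : Set _) := rfl
  have hcardG : Nat.card (Fin d → ZMod n) = n ^ d := by
    simp [Nat.card_fun, Nat.card_zmod]
  have hquot : Nat.card ((Fin d → ZMod n) ⧸ f.ker) = n := by
    rw [Nat.card_congr (QuotientAddGroup.quotientKerEquivOfSurjective f hsurj).toEquiv]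
    exact Nat.card_zmod n
  have hmul := AddSubgroup.card_eq_card_quotient_mul_card_addSubgroup f.ker
  rw [hcardG, hquot] at hmul
  have : n ^ d = n * n ^ (d - 1) := by
    conv_lhs => rw [show d = (d - 1) + 1 by omega]
    rw [pow_succ]; ring
  rw [this] at hmul
  have := Nat.eq_of_mul_eq_mul_left hn hmul.symm
  rw [hkerset]
  exact this.symm ▸ rfl


set_option maxHeartbeats 2000000 in
/-- With `c l = gcd n₁ (b l)`, `w l = (n₁/c l)·e l + (b l/c l)·e_{d+1}` and
`gcd(n₁, b₁, …, b_d) = 1`, the number of points of `ℤ^{d+1}` in the half-open parallelepiped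
`{μ₁ w₁ + … + μ_d w_d : 0 < μ_l ≤ 1}`, multiplied by `∏ c l`, equals `n₁^{d-1}`. -/
theorem stmt3 (d : ℕ) (hd : 1 ≤ d) (n₁ : ℕ) (hn₁ : 0 < n₁) (b : Fin d → ℕ)
    (hgcd : Nat.gcd n₁ (Finset.univ.gcd b) = 1)
    (c : Fin d → ℕ) (hc : ∀ l, c l = Nat.gcd n₁ (b l))
    (w : Fin d → Fin (d + 1) → ℕ)
    (hw : ∀ l, w l = fun i => if i = Fin.castSucc l then n₁ / c l
        else if i = Fin.last d then b l / c l else 0)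
    (S : Set (Fin (d + 1) → ℤ))
    (hS : S = {v : Fin (d + 1) → ℤ | ∃ μ : Fin d → ℝ,
        (∀ l, 0 < μ l ∧ μ l ≤ 1) ∧
        (fun i => (v i : ℝ)) = ∑ l : Fin d, μ l • (fun i => (w l i : ℝ))}) :
    S.Finite ∧ S.ncard * ∏ l : Fin d, c l = n₁ ^ (d - 1) := by
  classical
  haveI : NeZero n₁ := ⟨hn₁.ne'⟩
  set m : Fin d → ℕ := fun l => n₁ / c l with hm
  have hcb : ∀ l, c l ∣ b l := fun l => (hc l) ▸ Nat.gcd_dvd_right _ _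
  have hcn : ∀ l, c l ∣ n₁ := fun l => (hc l) ▸ Nat.gcd_dvd_left _ _
  have hcpos : ∀ l, 0 < c l := fun l => (hc l) ▸ Nat.gcd_pos_of_pos_left _ hn₁
  have hmc : ∀ l, m l * c l = n₁ := fun l => Nat.div_mul_cancel (hcn l)
  have hmpos : ∀ l, 0 < m l := fun l => Nat.div_pos (Nat.le_of_dvd hn₁ (hcn l)) (hcpos l)
  have hmb : ∀ l, m l * b l = n₁ * (b l / c l) := by
    intro l
    conv_lhs => rw [show b l = c l * (b l / c l) from (Nat.mul_div_cancel' (hcb l)).symm]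
    rw [← mul_assoc, hmc]
  set A : Set (Fin d → ℤ) :=
    {u | (∀ l, 1 ≤ u l ∧ u l ≤ m l) ∧ (n₁ : ℤ) ∣ ∑ l, u l * b l} with hA
  set g : (Fin d → ℤ) → (Fin (d + 1) → ℤ) :=
    fun u => Fin.snoc u ((∑ l, u l * b l) / n₁) with hg
  have hginj : Function.Injective g := by
    intro u u' h
    funext l
    have := congrFun h (Fin.castSucc l)
    simpa [hg, Fin.snoc_castSucc] using this
  have hmR : ∀ l, (0 : ℝ) < (m l : ℝ) := fun l => by exact_mod_cast hmpos l
  have hn₁R : (0 : ℝ) < (n₁ : ℝ) := by exact_mod_cast hn₁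
  have hwcs : ∀ l l' : Fin d, w l (Fin.castSucc l') = if l' = l then m l else 0 := by
    intro l l'
    rw [hw l]
    simp only [Fin.castSucc_inj, (Fin.castSucc_lt_last l').ne, if_false]
    rfl
  have hwlast : ∀ l, w l (Fin.last d) = b l / c l := by
    intro l
    rw [hw l]
    simp only [(Fin.castSucc_lt_last l).ne', if_false, if_pos rfl, if_true]
  have hcqR : ∀ l, (c l : ℝ) * ((b l / c l : ℕ) : ℝ) = (b l : ℝ) := fun l => by
    exact_mod_cast Nat.mul_div_cancel' (hcb l)
  have hmcR : ∀ l, (m l : ℝ) * (c l : ℝ) = (n₁ : ℝ) := fun l => by exact_mod_cast hmc l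
  have hSA : S = g '' A := by
    rw [hS]
    ext v
    constructor
    · rintro ⟨μ, hb01, hμeq⟩
      have hvi : ∀ i, (v i : ℝ) = ∑ l, μ l * (w l i : ℝ) := by
        intro i
        have := congrFun hμeq i
        simpa [Finset.sum_apply, Pi.smul_apply, smul_eq_mul] using this
      have hvl : ∀ l', (v (Fin.castSucc l') : ℝ) = μ l' * (m l' : ℝ) := by
        intro l'
        rw [hvi]
        rw [Finset.sum_eq_single l']
        · rw [hwcs l' l', if_pos rfl]
        · intro l _ hl
          rw [hwcs l l', if_neg (Ne.symm hl)]
          simp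
        · intro h
          exact absurd (Finset.mem_univ l') h
      have hvlast : (v (Fin.last d) : ℝ) = ∑ l, μ l * ((b l / c l : ℕ) : ℝ) := by
        rw [hvi]
        exact Finset.sum_congr rfl fun l _ => by rw [hwlast l]
      have hbounds : ∀ l, 1 ≤ v (Fin.castSucc l) ∧ v (Fin.castSucc l) ≤ (m l : ℤ) := by
        intro l
        have h0 := (hb01 l).1
        have h1 := (hb01 l).2
        have hpos : (0 : ℝ) < (v (Fin.castSucc l) : ℝ) := by
          rw [hvl l]; exact mul_pos h0 (hmR l)
        have hle : (v (Fin.castSucc l) : ℝ) ≤ (m l : ℝ) := by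
          rw [hvl l]
          nlinarith [hmR l]
        constructor
        · exact_mod_cast hpos
        · exact_mod_cast hle
      have hkey : (n₁ : ℝ) * (v (Fin.last d) : ℝ)
          = ∑ l, (v (Fin.castSucc l) : ℝ) * (b l : ℝ) := by
        rw [hvlast, Finset.mul_sum]
        refine Finset.sum_congr rfl fun l _ => ?_
        rw [hvl l, ← hmcR l, ← hcqR l]
        ring
      have hkeyZ : (n₁ : ℤ) * v (Fin.last d) = ∑ l, v (Fin.castSucc l) * (b l : ℤ) := by
        have : ((n₁ : ℤ) * v (Fin.last d) : ℝ) = ((∑ l, v (Fin.castSucc l) * (b l : ℤ) : ℤ) : ℝ) := by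
          push_cast
          exact hkey
        exact_mod_cast this
      refine ⟨fun l => v (Fin.castSucc l), ⟨hbounds, ⟨v (Fin.last d), hkeyZ.symm⟩⟩, ?_⟩
      funext i
      refine Fin.lastCases ?_ ?_ i
      · show Fin.snoc _ _ (Fin.last d) = _
        rw [Fin.snoc_last]
        rw [← hkeyZ]
        exact Int.mul_ediv_cancel_left _ (by exact_mod_cast hn₁.ne')
      · intro l
        show Fin.snoc _ _ (Fin.castSucc l) = _
        rw [Fin.snoc_castSucc]
    · rintro ⟨u, ⟨hub, hud⟩, rfl⟩
      refine ⟨fun l => (u l : ℝ) / (m l : ℝ), fun l => ?_, ?_⟩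
      · constructor
        · apply div_pos _ (hmR l)
          exact_mod_cast lt_of_lt_of_le zero_lt_one (hub l).1
        · rw [div_le_one (hmR l)]
          exact_mod_cast (hub l).2
      · obtain ⟨t, ht⟩ := hud
        have hgt : (∑ l, u l * (b l : ℤ)) / (n₁ : ℤ) = t := by
          rw [ht]
          exact Int.mul_ediv_cancel_left _ (by exact_mod_cast hn₁.ne')
        funext i
        rw [Finset.sum_apply]
        simp only [Pi.smul_apply, smul_eq_mul]
        refine Fin.lastCases ?_ ?_ i
        · have hgl : g u (Fin.last d) = (∑ l, u l * (b l : ℤ)) / (n₁ : ℤ) := by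
            rw [hg]
            exact Fin.snoc_last _ _
          rw [hgl, hgt]
          have hterm : ∀ l, (u l : ℝ) / (m l : ℝ) * ((w l (Fin.last d) : ℕ) : ℝ)
              = (u l : ℝ) * (b l : ℝ) / (n₁ : ℝ) := by
            intro l
            have hmbR : (m l : ℝ) * (b l : ℝ) = (n₁ : ℝ) * ((b l / c l : ℕ) : ℝ) := by
              exact_mod_cast hmb l
            rw [hwlast l, div_mul_eq_mul_div, div_eq_div_iff (hmR l).ne' hn₁R.ne']
            linear_combination (-(u l : ℝ)) * hmbR
          rw [Finset.sum_congr rfl fun l _ => hterm l, ← Finset.sum_div]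
          have hsum : (t : ℝ) * (n₁ : ℝ) = ∑ l, (u l : ℝ) * (b l : ℝ) := by
            have h2 : ((∑ l, u l * (b l : ℤ) : ℤ) : ℝ) = (((n₁ : ℤ) * t : ℤ) : ℝ) :=
              congrArg (fun z : ℤ => (z : ℝ)) ht
            push_cast at h2
            linarith
          rw [← hsum]
          field_simp
        · intro l
          have hgc : g u (Fin.castSucc l) = u l := by
            rw [hg]
            exact Fin.snoc_castSucc _ _ _
          rw [hgc]
          rw [Finset.sum_eq_single l]
          · rw [hwcs l l, if_pos rfl]
            exact (div_mul_cancel₀ _ (hmR l).ne').symm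
          · intro l' _ hl'
            rw [hwcs l' l, if_neg fun h => hl' h.symm]
            simp
          · intro h
            exact absurd (Finset.mem_univ l) h
  have hAfin : A.Finite := by
    have : A ⊆ Set.pi Set.univ (fun l => Set.Icc (1 : ℤ) (m l)) := by
      intro u hu l _
      exact ⟨(hu.1 l).1, (hu.1 l).2⟩
    exact Set.Finite.subset (Set.Finite.pi fun l => Set.finite_Icc _ _) this
  have hcard : Nat.card A * ∏ l, c l = n₁ ^ (d - 1) := by
    set Afull : Set (Fin d → ℤ) :=
      {u | (∀ l, 1 ≤ u l ∧ u l ≤ n₁) ∧ (n₁ : ℤ) ∣ ∑ l, u l * b l} with hAfull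
    set B : Set (Fin d → ZMod n₁) := {x | ∑ l, x l * (b l : ZMod n₁) = 0} with hB
    have hmcZ : ∀ l, (m l : ℤ) * c l = n₁ := by intro l; exact_mod_cast hmc l
    have hmbZ : ∀ l, (m l : ℤ) * b l = n₁ * ((b l / c l : ℕ) : ℤ) := by
      intro l; exact_mod_cast hmb l
    -- Forward map A × K → Afull
    have hF : ∀ (u : Fin d → ℤ) (k : ∀ l, Fin (c l)), u ∈ A →
        (fun l => u l + (k l : ℤ) * m l) ∈ Afull := by
      intro u k hu
      constructor
      · intro l
        have h1 := (hu.1 l).1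
        have h2 := (hu.1 l).2
        have hk0 : (0 : ℤ) ≤ (k l : ℤ) := Int.natCast_nonneg _
        have hk : ((k l : ℕ) : ℤ) ≤ (c l : ℤ) - 1 := by
          have := (k l).isLt; omega
        have hm0 : (0 : ℤ) ≤ (m l : ℤ) := Int.natCast_nonneg _
        constructor
        · show (1 : ℤ) ≤ u l + (k l : ℤ) * m l
          nlinarith
        · show u l + (k l : ℤ) * (m l : ℤ) ≤ (n₁ : ℤ)
          nlinarith [hmcZ l, mul_le_mul_of_nonneg_right hk hm0]
      · have hsplit : ∑ l, (u l + (k l : ℤ) * m l) * b l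
            = ∑ l, u l * b l + ∑ l, (k l : ℤ) * ((m l : ℤ) * b l) := by
          rw [← Finset.sum_add_distrib]
          exact Finset.sum_congr rfl fun l _ => by ring
        rw [hsplit]
        exact dvd_add hu.2 (Finset.dvd_sum fun l _ =>
          ⟨(k l : ℤ) * ((b l / c l : ℕ) : ℤ), by rw [hmbZ l]; ring⟩)
    set F : (↥A × ∀ l, Fin (c l)) → ↥Afull :=
      fun p => ⟨fun l => (p.1 : Fin d → ℤ) l + (p.2 l : ℤ) * m l, hF _ _ p.1.2⟩ with hFdef
    have hFbij : Function.Bijective F := by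
      constructor
      · rintro ⟨⟨u, hu⟩, k⟩ ⟨⟨u', hu'⟩, k'⟩ h
        have heq : ∀ l, u l + (k l : ℤ) * m l = u' l + (k' l : ℤ) * m l :=
          fun l => congrFun (Subtype.ext_iff.1 h) l
        have hkey : ∀ l, u l = u' l ∧ (k l : ℤ) = (k' l : ℤ) := by
          intro l
          have e := heq l
          have h1 := (hu.1 l).1
          have h2 := (hu.1 l).2
          have h1' := (hu'.1 l).1
          have h2' := (hu'.1 l).2
          have hk0 : (0 : ℤ) ≤ (k l : ℤ) := Int.natCast_nonneg _
          have hk0' : (0 : ℤ) ≤ (k' l : ℤ) := Int.natCast_nonneg _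
          have hmZ : (1 : ℤ) ≤ (m l : ℤ) := by exact_mod_cast hmpos l
          have hkk : (k l : ℤ) = (k' l : ℤ) := by
            rcases lt_trichotomy ((k l : ℕ) : ℤ) ((k' l : ℕ) : ℤ) with hlt | hEq | hgt
            · exfalso
              have : ((k l : ℕ) : ℤ) + 1 ≤ (k' l : ℕ) := hlt
              nlinarith
            · exact hEq
            · exfalso
              have : ((k' l : ℕ) : ℤ) + 1 ≤ (k l : ℕ) := hgt
              nlinarith
          refine ⟨by nlinarith [hkk], hkk⟩
        refine Prod.ext (Subtype.ext (funext fun l => (hkey l).1)) (funext fun l => ?_)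
        exact Fin.ext (by exact_mod_cast (hkey l).2)
      · rintro ⟨u', hu'⟩
        obtain ⟨h1, h2⟩ := hu'
        set q : Fin d → ℤ := fun l => (u' l - 1) / m l with hqdef
        have hq0 : ∀ l, 0 ≤ q l := fun l =>
          Int.ediv_nonneg (by have := (h1 l).1; omega) (Int.natCast_nonneg _)
        have hmZpos : ∀ l, (0 : ℤ) < (m l : ℤ) := fun l => by exact_mod_cast hmpos l
        have hqc : ∀ l, q l < c l := by
          intro l
          rw [hqdef]
          rw [Int.ediv_lt_iff_lt_mul (hmZpos l)]
          have := (h1 l).2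
          have := hmcZ l
          nlinarith
        set k : ∀ l, Fin (c l) := fun l => ⟨(q l).toNat, by have := hq0 l; have := hqc l; omega⟩
          with hkdef
        have hkq : ∀ l, ((k l : ℕ) : ℤ) = q l := fun l => Int.toNat_of_nonneg (hq0 l)
        set u : Fin d → ℤ := fun l => u' l - q l * m l with hudef
        have hbounds : ∀ l, 1 ≤ u l ∧ u l ≤ m l := by
          intro l
          have hdm := Int.mul_ediv_add_emod (u' l - 1) (m l)
          have hr0 : 0 ≤ (u' l - 1) % m l := Int.emod_nonneg _ (by exact_mod_cast (hmpos l).ne')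
          have hrm : (u' l - 1) % m l < m l := Int.emod_lt_of_pos _ (hmZpos l)
          have : (m l : ℤ) * q l = q l * m l := by ring
          constructor <;> simp only [hudef] <;> linarith [hdm]
        have hudvd : (n₁ : ℤ) ∣ ∑ l, u l * b l := by
          have hsplit : ∑ l, u l * b l
              = ∑ l, u' l * b l - ∑ l, q l * ((m l : ℤ) * b l) := by
            rw [← Finset.sum_sub_distrib]
            exact Finset.sum_congr rfl fun l _ => by simp only [hudef]; ring
          rw [hsplit]
          exact dvd_sub h2 (Finset.dvd_sum fun l _ =>
            ⟨q l * ((b l / c l : ℕ) : ℤ), by rw [hmbZ l]; ring⟩)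
        refine ⟨⟨⟨u, hbounds, hudvd⟩, k⟩, ?_⟩
        refine Subtype.ext (funext fun l => ?_)
        simp only [hFdef, hudef, hkq l]
        ring
    -- Forward map Afull → B
    have hG : ∀ u : Fin d → ℤ, u ∈ Afull →
        (fun l => ((u l : ℤ) : ZMod n₁)) ∈ B := by
      intro u hu
      have := (ZMod.intCast_zmod_eq_zero_iff_dvd (∑ l, u l * b l) n₁).2 hu.2
      push_cast at this
      exact this
    set G : ↥Afull → ↥B := fun p => ⟨fun l => ((p : Fin d → ℤ) l : ZMod n₁), hG _ p.2⟩
      with hGdef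
    have hGbij : Function.Bijective G := by
      constructor
      · rintro ⟨u, hu⟩ ⟨u', hu'⟩ h
        refine Subtype.ext (funext fun l => ?_)
        have heq : ((u l : ℤ) : ZMod n₁) = ((u' l : ℤ) : ZMod n₁) :=
          congrFun (Subtype.ext_iff.1 h) l
        have hdvd : (n₁ : ℤ) ∣ (u l - u' l) := by
          rw [← ZMod.intCast_zmod_eq_zero_iff_dvd]
          push_cast
          rw [sub_eq_zero]
          exact heq
        have habs : |u l - u' l| < n₁ := by
          have := (hu.1 l).1
          have := (hu.1 l).2
          have := (hu'.1 l).1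
          have := (hu'.1 l).2
          rw [abs_lt]; omega
        have := Int.eq_zero_of_abs_lt_dvd hdvd habs
        show u l = u' l
        omega
      · rintro ⟨x, hx⟩
        set u : Fin d → ℤ := fun l => if x l = 0 then (n₁ : ℤ) else ((x l).val : ℤ)
          with hudef
        have hcast : ∀ l, ((u l : ℤ) : ZMod n₁) = x l := by
          intro l
          simp only [hudef]
          split
          · rename_i h0
            rw [h0]
            push_cast
            exact ZMod.natCast_self n₁
          · push_cast
            exact ZMod.natCast_rightInverse (x l)
        have hbounds : ∀ l, 1 ≤ u l ∧ u l ≤ n₁ := by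
          intro l
          simp only [hudef]
          split
          · omega
          · rename_i h0
            have hlt := ZMod.val_lt (x l)
            have hne : (x l).val ≠ 0 := fun hv => h0 ((ZMod.val_eq_zero (x l)).1 hv)
            omega
        have hdvd : (n₁ : ℤ) ∣ ∑ l, u l * b l := by
          rw [← ZMod.intCast_zmod_eq_zero_iff_dvd]
          push_cast
          calc ∑ l, ((u l : ℤ) : ZMod n₁) * (b l : ZMod n₁)
              = ∑ l, x l * (b l : ZMod n₁) :=
                Finset.sum_congr rfl fun l _ => by rw [hcast l]
            _ = 0 := hx
        exact ⟨⟨u, hbounds, hdvd⟩, Subtype.ext (funext fun l => hcast l)⟩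
    have hBcard : Nat.card B = n₁ ^ (d - 1) := ker_count d n₁ hn₁ hd b hgcd
    have hKcard : Nat.card (∀ l, Fin (c l)) = ∏ l, c l := by simp [Nat.card_pi]
    calc Nat.card A * ∏ l, c l
        = Nat.card (↥A × ∀ l, Fin (c l)) := by rw [Nat.card_prod, hKcard]
      _ = Nat.card Afull := Nat.card_congr (Equiv.ofBijective F hFbij)
      _ = Nat.card B := Nat.card_congr (Equiv.ofBijective G hGbij)
      _ = n₁ ^ (d - 1) := hBcard
  refine ⟨hSA ▸ hAfin.image g, ?_⟩
  rw [hSA, Set.ncard_image_of_injective _ hginj, ← Nat.card_coe_set_eq]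
  exact hcard
end

section
/- Let d ≥ 1, let n₁ be a positive integer and b₁,…,b_d ∈ ℕ with gcd(n₁, b₁, …, b_d) = 1. Setting c_l := gcd(n₁, b_l), the product c₁·c₂·⋯·c_d divides n₁^{d−1}. -/
/-!
For every `i ∈ s`, the product `∏_{j ∈ s} a j` is `a i` times `∏_{j ≠ i} a j`, and the latter
divides `n ^ (#s - 1)` because every factor divides `n`. Hence the product divides
`gcd_i (a i * n ^ (#s - 1)) = gcd_i (a i) * n ^ (#s - 1)`, and here `gcd_i c_i = 1` because a
common divisor of the `c_i = gcd n₁ b_i` divides `gcd n₁ (gcd_i b_i) = 1`.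
-/

namespace Finset

variable {ι α : Type*}

theorem prod_dvd_mul_pow_card_sub_one [CommMonoid α] {s : Finset ι} {a : ι → α} {n : α}
    (ha : ∀ i ∈ s, a i ∣ n) {i : ι} (hi : i ∈ s) :
    ∏ j ∈ s, a j ∣ a i * n ^ (#s - 1) := by
  classical
  rw [← mul_prod_erase s a hi, ← card_erase_of_mem hi, ← prod_const]
  exact mul_dvd_mul_left _ (prod_dvd_prod_of_dvd _ _ fun j hj => ha j (mem_of_mem_erase hj))

theorem prod_dvd_gcd_mul_pow_card_sub_one [CommMonoidWithZero α] [NormalizedGCDMonoid α]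
    {s : Finset ι} {a : ι → α} {n : α} (ha : ∀ i ∈ s, a i ∣ n) :
    ∏ j ∈ s, a j ∣ s.gcd a * n ^ (#s - 1) :=
  (dvd_gcd fun _ hi => prod_dvd_mul_pow_card_sub_one ha hi).trans (gcd_mul_right' s a _).dvd

end Finset

theorem stmt4_general (d : ℕ) (hd : 1 ≤ d) (n₁ : ℕ) (b : Fin d → ℕ)
    (hgcd : Nat.gcd n₁ (Finset.univ.gcd b) = 1)
    (c : Fin d → ℕ) (hc : ∀ l, c l = Nat.gcd n₁ (b l)) :
    (∏ l : Fin d, c l) ∣ n₁ ^ (d - 1) := by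
  have hc_dvd : ∀ l ∈ Finset.univ, c l ∣ n₁ := fun l _ => hc l ▸ Nat.gcd_dvd_left _ _
  have hgcd_c : Finset.univ.gcd c = 1 := by
    refine Nat.eq_one_of_dvd_one (hgcd ▸ Nat.dvd_gcd ?_ (Finset.dvd_gcd fun l _ => ?_))
    · exact (Finset.gcd_dvd (Finset.mem_univ ⟨0, hd⟩)).trans (hc_dvd _ (Finset.mem_univ _))
    · exact (Finset.gcd_dvd (Finset.mem_univ l)).trans (hc l ▸ Nat.gcd_dvd_right _ _)
  simpa [hgcd_c] using Finset.prod_dvd_gcd_mul_pow_card_sub_one hc_dvd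

/-- If `n₁` is a positive integer and `b₁, …, b_d ∈ ℕ` satisfy
`gcd(n₁, b₁, …, b_d) = 1`, then with `c l := gcd n₁ (b l)` the product
`c₁ ⋯ c_d` divides `n₁^{d-1}`. -/
theorem stmt4 (d : ℕ) (hd : 1 ≤ d) (n₁ : ℕ) (hn₁ : 0 < n₁) (b : Fin d → ℕ)
    (hgcd : Nat.gcd n₁ (Finset.univ.gcd b) = 1)
    (c : Fin d → ℕ) (hc : ∀ l, c l = Nat.gcd n₁ (b l)) :
    (∏ l : Fin d, c l) ∣ n₁ ^ (d - 1) :=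
  stmt4_general d hd n₁ b hgcd c hc
end

section
/- Let d ≥ 1, let n₁ be a positive integer and b = (b₁,…,b_d) ∈ ℕ^d with b ≠ 0 and gcd(n₁, b₁, …, b_d) = 1. Let G := ℤ^{d+1} ∩ {μ₁w₁ + … + μ_dw_d : μ_l ∈ ℝ, 0 < μ_l ≤ 1 for all l}. Then for every α ∈ ℕ there exists a finite set G^α contained in H_α := {v ∈ ℤ^{d+1} : v_i > 0 for all i, and b₁v₁ + … + b_dv_d − n₁v_{d+1} + α = 0}, together with a bijection between G and G^α, such that every v ∈ H_α can be written in exactly one way as v = g + m₁w₁ + … + m_dw_d with g ∈ G^α and m₁,…,m_d ∈ ℕ, and conversely every vector of this form lies in H_α. -/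
lemma stmt5_bez (d : ℕ) (b : Fin d → ℕ) (s : Finset (Fin d)) :
    ∃ t : Fin d → ℤ, ∑ l ∈ s, t l * b l = ((s.gcd b : ℕ) : ℤ) := by
  induction s using Finset.induction with
  | empty => exact ⟨0, by simp⟩
  | @insert a s ha ih =>
    obtain ⟨t, ht⟩ := ih
    refine ⟨fun l => if l = a then Nat.gcdA (b a) (s.gcd b)
      else Nat.gcdB (b a) (s.gcd b) * t l, ?_⟩
    rw [Finset.sum_insert ha, Finset.gcd_insert]
    simp only [if_pos rfl]
    rw [Finset.sum_congr rfl (fun l hl => by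
      rw [if_neg (fun h : l = a => ha (h ▸ hl))])]
    have h2 : ∑ l ∈ s, Nat.gcdB (b a) (s.gcd b) * t l * b l
        = Nat.gcdB (b a) (s.gcd b) * ∑ l ∈ s, t l * b l := by
      rw [Finset.mul_sum]; exact Finset.sum_congr rfl (fun l _ => by ring)
    rw [h2, ht]
    have h3 := Nat.gcd_eq_gcd_ab (b a) (s.gcd b)
    have hg : GCDMonoid.gcd (b a) (s.gcd b) = Nat.gcd (b a) (s.gcd b) := rfl
    rw [hg, h3]; simp only [if_true]; ring

lemma stmt5_boxEquiv (d n : ℕ) (N B : Fin d → ℤ) (hN : ∀ l, 0 < N l)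
    (hdvd : ∀ l, (n:ℤ) ∣ B l * N l) (r r' : ℤ) (t : Fin d → ℤ)
    (ht : (n:ℤ) ∣ (∑ l, B l * t l) + (r' - r)) :
    Nonempty ({u : Fin d → ℤ // (∀ l, 1 ≤ u l ∧ u l ≤ N l) ∧ (n:ℤ) ∣ (∑ l, B l * u l) + r}
      ≃ {u : Fin d → ℤ // (∀ l, 1 ≤ u l ∧ u l ≤ N l) ∧ (n:ℤ) ∣ (∑ l, B l * u l) + r'}) := by
  have hbox : ∀ (t u : Fin d → ℤ) (l : Fin d),
      1 ≤ (u l - 1 + t l) % N l + 1 ∧ (u l - 1 + t l) % N l + 1 ≤ N l := fun t u l =>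
    ⟨by have := Int.emod_nonneg (u l - 1 + t l) (hN l).ne'; omega,
     by have := Int.emod_lt_of_pos (u l - 1 + t l) (hN l); omega⟩
  have hcong : ∀ (t u : Fin d → ℤ),
      (n:ℤ) ∣ (∑ l, B l * ((u l - 1 + t l) % N l + 1)) - ((∑ l, B l * u l) + ∑ l, B l * t l) := by
    intro t u
    have e : (∑ l, B l * ((u l - 1 + t l) % N l + 1)) - ((∑ l, B l * u l) + ∑ l, B l * t l)
        = ∑ l, (B l * N l) * (-((u l - 1 + t l) / N l)) := by
      rw [← Finset.sum_add_distrib, ← Finset.sum_sub_distrib]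
      refine Finset.sum_congr rfl fun l _ => ?_
      rw [Int.emod_def]; ring
    rw [e]
    exact Finset.dvd_sum fun l _ => (hdvd l).mul_right _
  have hinv : ∀ (t t' u : Fin d → ℤ), t' = -t → (∀ l, 1 ≤ u l ∧ u l ≤ N l) →
      (fun l => ((((u l - 1 + t l) % N l + 1)) - 1 + t' l) % N l + 1) = u := by
    intro t t' u htt hu
    funext l
    have htl : t' l = -(t l) := by rw [htt]; rfl
    have h1 : ((u l - 1 + t l) % N l + 1 - 1 + t' l) = (u l - 1 + t l) % N l - t l := by
      rw [htl]; ring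
    rw [h1]
    have h2 : ((u l - 1 + t l) % N l - t l) % N l = (u l - 1) % N l := by
      conv_rhs => rw [show u l - 1 = (u l - 1 + t l) - t l by ring]
      rw [Int.sub_emod, Int.emod_emod_of_dvd _ dvd_rfl, ← Int.sub_emod]
    rw [h2, Int.emod_eq_of_lt (by have := hu l; omega) (by have := hu l; omega)]
    ring
  have ht' : (n:ℤ) ∣ (∑ l, B l * (-t) l) + (r - r') := by
    have e : (∑ l, B l * (-t) l) + (r - r') = -((∑ l, B l * t l) + (r' - r)) := by
      rw [Finset.sum_congr rfl fun l _ => (by rw [Pi.neg_apply]; ring :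
        B l * (-t) l = -(B l * t l)), Finset.sum_neg_distrib]
      ring
    rw [e]; exact ht.neg_right
  refine ⟨⟨fun u => ⟨fun l => (u.1 l - 1 + t l) % N l + 1, hbox t u.1, ?_⟩,
          fun u => ⟨fun l => (u.1 l - 1 + (-t) l) % N l + 1, hbox (-t) u.1, ?_⟩,
          fun u => Subtype.ext (hinv t (-t) u.1 rfl u.2.1),
          fun u => Subtype.ext (hinv (-t) t u.1 (neg_neg t).symm u.2.1)⟩⟩
  · have e : (∑ l, B l * ((u.1 l - 1 + t l) % N l + 1)) + r'
        = ((∑ l, B l * ((u.1 l - 1 + t l) % N l + 1)) - ((∑ l, B l * u.1 l) + ∑ l, B l * t l))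
          + (((∑ l, B l * u.1 l) + r) + ((∑ l, B l * t l) + (r' - r))) := by ring
    rw [e]
    exact dvd_add (hcong t u.1) (dvd_add u.2.2 ht)
  · have e : (∑ l, B l * ((u.1 l - 1 + (-t) l) % N l + 1)) + r
        = ((∑ l, B l * ((u.1 l - 1 + (-t) l) % N l + 1)) - ((∑ l, B l * u.1 l) + ∑ l, B l * (-t) l))
          + (((∑ l, B l * u.1 l) + r') + ((∑ l, B l * (-t) l) + (r - r'))) := by ring
    rw [e]
    exact dvd_add (hcong (-t) u.1) (dvd_add u.2.2 ht')

/-- With `c l = gcd n₁ (b l)`, `w l = (n₁/c l)·e l + (b l/c l)·e_{d+1}`,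
`b ≠ 0` and `gcd(n₁, b₁, …, b_d) = 1`, let `G` be the set of integer points of the
half-open parallelepiped spanned by `w₁, …, w_d`. For every `α ∈ ℕ` there is a finite
set `Gα` contained in `H α = {v ∈ ℤ^{d+1} : v > 0, Σ b l v l - n₁ v_{d+1} + α = 0}`,
in bijection with `G`, such that every `v ∈ H α` is uniquely `g + Σ m l • w l` with
`g ∈ Gα`, `m ∈ ℕ^d`, and conversely every such vector lies in `H α`. -/
theorem stmt5 (d : ℕ) (hd : 1 ≤ d) (n₁ : ℕ) (hn₁ : 0 < n₁) (b : Fin d → ℕ)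
    (hb : b ≠ 0) (hgcd : Nat.gcd n₁ (Finset.univ.gcd b) = 1)
    (c : Fin d → ℕ) (hc : ∀ l, c l = Nat.gcd n₁ (b l))
    (w : Fin d → Fin (d + 1) → ℕ)
    (hw : ∀ l, w l = fun i => if i = Fin.castSucc l then n₁ / c l
        else if i = Fin.last d then b l / c l else 0)
    (G : Set (Fin (d + 1) → ℤ))
    (hG : G = {v : Fin (d + 1) → ℤ | ∃ μ : Fin d → ℝ,
        (∀ l, 0 < μ l ∧ μ l ≤ 1) ∧
        (fun i => (v i : ℝ)) = ∑ l : Fin d, μ l • (fun i => (w l i : ℝ))})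
    (H : ℕ → Set (Fin (d + 1) → ℤ))
    (hH : ∀ α : ℕ, H α = {v : Fin (d + 1) → ℤ | (∀ i, 0 < v i) ∧
        (∑ l : Fin d, (b l : ℤ) * v (Fin.castSucc l)) - (n₁ : ℤ) * v (Fin.last d)
          + (α : ℤ) = 0}) :
    ∀ α : ℕ, ∃ Gα : Set (Fin (d + 1) → ℤ),
      Gα.Finite ∧ Gα ⊆ H α ∧ Nonempty (G ≃ Gα) ∧
      (∀ v ∈ H α, ∃! p : (Fin (d + 1) → ℤ) × (Fin d → ℕ), p.1 ∈ Gα ∧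
        v = p.1 + ∑ l : Fin d, (p.2 l : ℤ) • (fun i => (w l i : ℤ))) ∧
      (∀ g ∈ Gα, ∀ m : Fin d → ℕ,
        (g + ∑ l : Fin d, (m l : ℤ) • (fun i => (w l i : ℤ))) ∈ H α) := by
  intro α
  -- basic divisibility facts
  have hcn : ∀ l, c l ∣ n₁ := fun l => (hc l) ▸ Nat.gcd_dvd_left _ _
  have hcb : ∀ l, c l ∣ b l := fun l => (hc l) ▸ Nat.gcd_dvd_right _ _
  have hcpos : ∀ l, 0 < c l := fun l => (hc l) ▸ Nat.gcd_pos_of_pos_left _ hn₁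
  set N : Fin d → ℕ := fun l => n₁ / c l with hNdef
  have hNpos : ∀ l, 0 < N l := fun l => Nat.div_pos (Nat.le_of_dvd hn₁ (hcn l)) (hcpos l)
  have hN0 : ∀ j, (0:ℤ) < (N j : ℤ) := fun j => by exact_mod_cast hNpos j
  have hkey : ∀ l, b l * N l = n₁ * (b l / c l) := by
    intro l
    rw [← Nat.mul_div_assoc (b l) (hcn l), ← Nat.mul_div_assoc n₁ (hcb l), Nat.mul_comm]
  have hkeyZ : ∀ l, (b l : ℤ) * (N l : ℤ) = (n₁ : ℤ) * ((b l / c l : ℕ) : ℤ) := by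
    intro l; exact_mod_cast congrArg (Nat.cast : ℕ → ℤ) (hkey l)
  -- evaluation of w
  have hwc : ∀ (l j : Fin d), w l (Fin.castSucc j) = if j = l then N l else 0 := by
    intro l j
    rw [hw l]
    simp only [Fin.castSucc_inj, (Fin.castSucc_lt_last j).ne, if_false]
    rfl
  have hwl : ∀ l, w l (Fin.last d) = b l / c l := by
    intro l
    rw [hw l]
    simp only [(Fin.castSucc_lt_last l).ne', if_false, if_true, if_pos rfl]
  -- sum evaluation over ℤ
  have hS : ∀ (m : Fin d → ℤ) (i : Fin (d+1)),
      (∑ l : Fin d, m l • (fun i => (w l i : ℤ))) i = ∑ l : Fin d, m l * (w l i : ℤ) := by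
    intro m i
    rw [Finset.sum_apply]
    simp
  have hScs : ∀ (m : Fin d → ℤ) (j : Fin d),
      (∑ l : Fin d, m l • (fun i => (w l i : ℤ))) (Fin.castSucc j) = m j * (N j : ℤ) := by
    intro m j
    rw [hS]
    rw [Finset.sum_congr rfl fun l _ => (by rw [hwc l j] :
      m l * ((w l (Fin.castSucc j) : ℕ) : ℤ) = m l * ((if j = l then N l else 0 : ℕ) : ℤ))]
    simp [mul_ite, Finset.sum_ite_eq]
  have hSlast : ∀ (m : Fin d → ℤ),
      (∑ l : Fin d, m l • (fun i => (w l i : ℤ))) (Fin.last d)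
        = ∑ l : Fin d, m l * ((b l / c l : ℕ) : ℤ) := by
    intro m
    rw [hS]
    exact Finset.sum_congr rfl fun l _ => by rw [hwl l]
  -- positivity of the last coordinate
  have hpos : ∀ (r : ℤ), 0 ≤ r → ∀ v : Fin (d+1) → ℤ,
      (∀ l, 1 ≤ v (Fin.castSucc l)) →
      (∑ l : Fin d, (b l : ℤ) * v (Fin.castSucc l)) - (n₁ : ℤ) * v (Fin.last d) + r = 0 →
      0 < v (Fin.last d) := by
    intro r hr v hv heq
    obtain ⟨l₀, hl₀⟩ := Function.ne_iff.mp hb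
    have h2 : (0:ℤ) < (b l₀ : ℤ) * v (Fin.castSucc l₀) :=
      mul_pos (by exact_mod_cast Nat.pos_of_ne_zero hl₀) (by linarith [hv l₀])
    have h3 : (b l₀ : ℤ) * v (Fin.castSucc l₀) ≤ ∑ l : Fin d, (b l:ℤ) * v (Fin.castSucc l) :=
      Finset.single_le_sum
        (fun l _ => mul_nonneg (Int.natCast_nonneg _) (by linarith [hv l]))
        (Finset.mem_univ l₀)
    rcases lt_or_ge 0 (v (Fin.last d)) with h | h
    · exact h
    · exfalso
      have h4 : (n₁:ℤ) * v (Fin.last d) ≤ (n₁:ℤ) * 0 :=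
        mul_le_mul_of_nonneg_left h (Int.natCast_nonneg _)
      simp at h4
      linarith
  -- the candidate set
  set Gα : Set (Fin (d+1) → ℤ) :=
    {v | (∀ l, 1 ≤ v (Fin.castSucc l) ∧ v (Fin.castSucc l) ≤ (N l : ℤ)) ∧
      (∑ l : Fin d, (b l : ℤ) * v (Fin.castSucc l)) - (n₁ : ℤ) * v (Fin.last d)
        + (α : ℤ) = 0} with hGαdef
  have hGαH : Gα ⊆ H α := by
    rintro v ⟨hbox, heq⟩
    rw [hH α]
    refine ⟨?_, heq⟩
    intro i
    refine Fin.lastCases ?_ (fun j => ?_) i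
    · exact hpos α (Int.natCast_nonneg α) v (fun l => (hbox l).1) heq
    · linarith [(hbox j).1]
  refine ⟨Gα, ?_, hGαH, ?_, ?_, ?_⟩
  · -- finiteness
    set M : ℤ := (∑ l : Fin d, (b l:ℤ) * (N l:ℤ)) + (α:ℤ) + ∑ l : Fin d, (N l : ℤ) with hM
    apply Set.Finite.subset (Set.Finite.pi (fun _ : Fin (d+1) => Set.finite_Icc (1:ℤ) M))
    rintro v ⟨hbox, heq⟩
    have hbN : (0:ℤ) ≤ ∑ l : Fin d, (b l:ℤ) * (N l:ℤ) :=
      Finset.sum_nonneg fun l _ => mul_nonneg (Int.natCast_nonneg _) (Int.natCast_nonneg _)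
    have hsN : (0:ℤ) ≤ ∑ l : Fin d, (N l : ℤ) :=
      Finset.sum_nonneg fun l _ => Int.natCast_nonneg _
    have hlast : 0 < v (Fin.last d) := hpos α (Int.natCast_nonneg α) v (fun l => (hbox l).1) heq
    have hsum : ∑ l : Fin d, (b l:ℤ) * v (Fin.castSucc l) ≤ ∑ l : Fin d, (b l:ℤ) * (N l:ℤ) :=
      Finset.sum_le_sum fun l _ => mul_le_mul_of_nonneg_left (hbox l).2 (Int.natCast_nonneg _)
    intro i _
    simp only [Set.mem_Icc]
    refine Fin.lastCases ?_ (fun j => ?_) i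
    · constructor
      · omega
      · have h1 : v (Fin.last d) ≤ (n₁:ℤ) * v (Fin.last d) :=
          le_mul_of_one_le_left (by omega) (by exact_mod_cast hn₁)
        have h2 : (n₁:ℤ) * v (Fin.last d) = (∑ l : Fin d, (b l:ℤ) * v (Fin.castSucc l)) + α := by
          linarith
        omega
    · have h3 : (N j : ℤ) ≤ ∑ l : Fin d, (N l : ℤ) :=
        Finset.single_le_sum (fun l _ => Int.natCast_nonneg (N l)) (Finset.mem_univ j)
      exact ⟨(hbox j).1, by linarith [(hbox j).2]⟩
  · -- bijection with G
    -- characterization of G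
    have hGmem : ∀ v : Fin (d+1) → ℤ, v ∈ G ↔
        ((∀ l, 1 ≤ v (Fin.castSucc l) ∧ v (Fin.castSucc l) ≤ (N l:ℤ)) ∧
          (∑ l : Fin d, (b l:ℤ) * v (Fin.castSucc l)) - (n₁:ℤ) * v (Fin.last d) + (0:ℤ) = 0) := by
      have hSR : ∀ (μ : Fin d → ℝ) (i : Fin (d+1)),
          (∑ l : Fin d, μ l • (fun i => (w l i : ℝ))) i = ∑ l : Fin d, μ l * (w l i : ℝ) := by
        intro μ i
        rw [Finset.sum_apply]
        simp
      have hSRcs : ∀ (μ : Fin d → ℝ) (j : Fin d),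
          (∑ l : Fin d, μ l • (fun i => (w l i : ℝ))) (Fin.castSucc j) = μ j * (N j : ℝ) := by
        intro μ j
        rw [hSR]
        rw [Finset.sum_congr rfl fun l _ => (by rw [hwc l j] :
          μ l * ((w l (Fin.castSucc j) : ℕ) : ℝ) = μ l * ((if j = l then N l else 0 : ℕ) : ℝ))]
        simp [mul_ite, Finset.sum_ite_eq]
      have hSRlast : ∀ (μ : Fin d → ℝ),
          (∑ l : Fin d, μ l • (fun i => (w l i : ℝ))) (Fin.last d)
            = ∑ l : Fin d, μ l * ((b l / c l : ℕ) : ℝ) := by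
        intro μ
        rw [hSR]
        exact Finset.sum_congr rfl fun l _ => by rw [hwl l]
      intro v
      rw [hG]
      simp only [Set.mem_setOf_eq]
      constructor
      · rintro ⟨μ, hμ, heq⟩
        have hvc : ∀ j, (v (Fin.castSucc j) : ℝ) = μ j * (N j : ℝ) := by
          intro j
          have h := congrFun heq (Fin.castSucc j)
          rwa [hSRcs] at h
        have hvl : (v (Fin.last d) : ℝ) = ∑ l : Fin d, μ l * ((b l / c l : ℕ) : ℝ) := by
          have h := congrFun heq (Fin.last d)
          rwa [hSRlast] at h
        have hNR : ∀ l, (0:ℝ) < (N l : ℝ) := fun l => by exact_mod_cast hNpos l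
        have hbox : ∀ l, 1 ≤ v (Fin.castSucc l) ∧ v (Fin.castSucc l) ≤ (N l : ℤ) := by
          intro l
          constructor
          · have h1 : (0:ℝ) < (v (Fin.castSucc l) : ℝ) := by
              rw [hvc l]; exact mul_pos (hμ l).1 (hNR l)
            have : (0:ℤ) < v (Fin.castSucc l) := by exact_mod_cast h1
            omega
          · have h1 : (v (Fin.castSucc l) : ℝ) ≤ (N l : ℝ) := by
              rw [hvc l]
              exact mul_le_of_le_one_left (le_of_lt (hNR l)) (hμ l).2
            exact_mod_cast h1
        refine ⟨hbox, ?_⟩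
        have hR : (n₁:ℝ) * (v (Fin.last d) : ℝ)
            = ∑ l : Fin d, (b l:ℝ) * (v (Fin.castSucc l) : ℝ) := by
          rw [hvl, Finset.mul_sum]
          refine Finset.sum_congr rfl fun l _ => ?_
          rw [hvc l]
          have hk : (n₁:ℝ) * ((b l / c l : ℕ) : ℝ) = (b l:ℝ) * (N l : ℝ) := by
            exact_mod_cast (hkey l).symm
          linear_combination μ l * hk
        have hZ : (n₁:ℤ) * v (Fin.last d) = ∑ l : Fin d, (b l:ℤ) * v (Fin.castSucc l) := by
          exact_mod_cast hR
        linarith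
      · rintro ⟨hbox, heq⟩
        have hZ : (n₁:ℤ) * v (Fin.last d) = ∑ l : Fin d, (b l:ℤ) * v (Fin.castSucc l) := by
          linarith
        have hN0' : ∀ l, (N l : ℝ) ≠ 0 := fun l => Nat.cast_ne_zero.mpr (hNpos l).ne'
        refine ⟨fun l => (v (Fin.castSucc l) : ℝ) / (N l : ℝ), fun l => ⟨?_, ?_⟩, ?_⟩
        · have h1 : (0:ℤ) < v (Fin.castSucc l) := by linarith [(hbox l).1]
          exact div_pos (by exact_mod_cast h1) (by exact_mod_cast hNpos l)
        · rw [div_le_one (by exact_mod_cast hNpos l)]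
          exact_mod_cast (hbox l).2
        · funext i
          refine Fin.lastCases ?_ (fun j => ?_) i
          · rw [hSRlast]
            have hn0 : (n₁:ℝ) ≠ 0 := Nat.cast_ne_zero.mpr hn₁.ne'
            apply mul_left_cancel₀ hn0
            rw [Finset.mul_sum]
            rw [Finset.sum_congr rfl fun l _ => (by
              have hk : (n₁:ℝ) * ((b l / c l : ℕ) : ℝ) = (b l:ℝ) * (N l : ℝ) := by
                exact_mod_cast (hkey l).symm
              rw [div_mul_eq_mul_div, mul_div_assoc', div_eq_iff (hN0' l)]
              linear_combination (v (Fin.castSucc l) : ℝ) * hk :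
              (n₁:ℝ) * ((v (Fin.castSucc l) : ℝ) / (N l : ℝ) * ((b l / c l : ℕ) : ℝ))
                = (b l:ℝ) * (v (Fin.castSucc l) : ℝ))]
            exact_mod_cast hZ
          · rw [hSRcs]
            rw [div_mul_cancel₀ _ (hN0' j)]
    -- the coordinate equivalences
    have mkE : ∀ r : ℤ, Nonempty
        ({v : Fin (d+1) → ℤ // (∀ l, 1 ≤ v (Fin.castSucc l) ∧ v (Fin.castSucc l) ≤ (N l:ℤ)) ∧
            (∑ l : Fin d, (b l:ℤ) * v (Fin.castSucc l)) - (n₁:ℤ) * v (Fin.last d) + r = 0}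
          ≃ {u : Fin d → ℤ // (∀ l, 1 ≤ u l ∧ u l ≤ (N l:ℤ)) ∧
              (n₁:ℤ) ∣ (∑ l : Fin d, (b l:ℤ) * u l) + r}) := by
      intro r
      have hn0 : (n₁:ℤ) ≠ 0 := by positivity
      refine ⟨⟨fun v => ⟨fun l => v.1 (Fin.castSucc l), v.2.1,
          ⟨v.1 (Fin.last d), by linarith [v.2.2]⟩⟩,
        fun u => ⟨Fin.snoc u.1 (((∑ l : Fin d, (b l:ℤ) * u.1 l) + r) / n₁), ?_, ?_⟩, ?_, ?_⟩⟩
      · intro l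
        rw [Fin.snoc_castSucc]
        exact u.2.1 l
      · have h1 := Int.mul_ediv_cancel' u.2.2
        simp only [Fin.snoc_castSucc, Fin.snoc_last]
        linarith
      · intro v
        apply Subtype.ext
        funext i
        refine Fin.lastCases ?_ ?_ i
        · simp only [Fin.snoc_last]
          have h2 : (∑ l : Fin d, (b l:ℤ) * v.1 (Fin.castSucc l)) + r
              = (n₁:ℤ) * v.1 (Fin.last d) := by
            linarith [v.2.2]
          rw [h2, Int.mul_ediv_cancel_left _ hn0]
        · intro j
          simp only [Fin.snoc_castSucc]
      · intro u
        apply Subtype.ext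
        funext l
        simp only [Fin.snoc_castSucc]
    -- the shift
    obtain ⟨y, hy⟩ := stmt5_bez d b Finset.univ
    have hBez := Nat.gcd_eq_gcd_ab n₁ (Finset.univ.gcd b)
    rw [hgcd] at hBez
    have ht : (n₁:ℤ) ∣ (∑ l : Fin d,
        (b l:ℤ) * ((-(α:ℤ)) * Nat.gcdB n₁ (Finset.univ.gcd b) * y l)) + ((α:ℤ) - 0) := by
      refine ⟨(α:ℤ) * Nat.gcdA n₁ (Finset.univ.gcd b), ?_⟩
      have h1 : ∑ l : Fin d, (b l:ℤ) * ((-(α:ℤ)) * Nat.gcdB n₁ (Finset.univ.gcd b) * y l)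
          = (-(α:ℤ)) * Nat.gcdB n₁ (Finset.univ.gcd b) * ∑ l : Fin d, y l * (b l:ℤ) := by
        rw [Finset.mul_sum]
        exact Finset.sum_congr rfl fun l _ => by ring
      rw [h1, hy]
      push_cast at hBez ⊢
      linear_combination (α:ℤ) * hBez
    obtain ⟨EB⟩ := stmt5_boxEquiv d n₁ (fun l => ((N l : ℕ) : ℤ)) (fun l => ((b l : ℕ) : ℤ))
      (fun l => hN0 l) (fun l => ⟨((b l / c l : ℕ) : ℤ), hkeyZ l⟩) 0 (α:ℤ)
      (fun l => (-(α:ℤ)) * Nat.gcdB n₁ (Finset.univ.gcd b) * y l) ht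
    obtain ⟨E0⟩ := mkE 0
    obtain ⟨Eα⟩ := mkE (α:ℤ)
    exact ⟨(((Equiv.subtypeEquivRight hGmem).trans E0).trans EB).trans Eα.symm⟩
  · -- unique decomposition
    intro v hv
    rw [hH α] at hv
    obtain ⟨hvpos, hveq⟩ := hv
    set m : Fin d → ℕ := fun l => ((v (Fin.castSucc l) - 1) / (N l : ℤ)).toNat with hmdef
    have hmz : ∀ l, (m l : ℤ) = (v (Fin.castSucc l) - 1) / (N l : ℤ) := by
      intro l
      exact Int.toNat_of_nonneg (Int.ediv_nonneg (by linarith [hvpos (Fin.castSucc l)])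
        (le_of_lt (hN0 l)))
    set S : Fin (d+1) → ℤ := ∑ l : Fin d, ((m l : ℤ)) • (fun i => (w l i : ℤ)) with hSdef
    set g : Fin (d+1) → ℤ := v - S with hgdef
    have hvg : v = g + S := by rw [hgdef]; abel
    have hgc : ∀ j, g (Fin.castSucc j) = v (Fin.castSucc j) - (m j : ℤ) * (N j : ℤ) := by
      intro j
      rw [hgdef, Pi.sub_apply, hSdef, hScs]
    have hgl : g (Fin.last d) = v (Fin.last d) - ∑ l : Fin d, (m l:ℤ) * ((b l / c l:ℕ):ℤ) := by
      rw [hgdef, Pi.sub_apply, hSdef, hSlast]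
    have hdiv : ∀ j, (N j:ℤ) * (m j:ℤ) + ((v (Fin.castSucc j) - 1) % (N j:ℤ))
        = v (Fin.castSucc j) - 1 := by
      intro j
      rw [hmz j]
      exact Int.mul_ediv_add_emod _ _
    have hbox : ∀ j, 1 ≤ g (Fin.castSucc j) ∧ g (Fin.castSucc j) ≤ (N j : ℤ) := by
      intro j
      have h1 := Int.emod_nonneg (v (Fin.castSucc j) - 1) (hN0 j).ne'
      have h2 := Int.emod_lt_of_pos (v (Fin.castSucc j) - 1) (hN0 j)
      have h3 : (m j:ℤ) * (N j:ℤ) = (N j:ℤ) * (m j:ℤ) := mul_comm _ _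
      rw [hgc j]
      constructor <;> linarith [hdiv j]
    have hgeq : (∑ l : Fin d, (b l:ℤ) * g (Fin.castSucc l)) - (n₁:ℤ) * g (Fin.last d)
        + (α:ℤ) = 0 := by
      have A : ∑ l : Fin d, (b l:ℤ) * g (Fin.castSucc l)
          = (∑ l : Fin d, (b l:ℤ) * v (Fin.castSucc l))
            - ∑ l : Fin d, (m l:ℤ) * ((b l:ℤ) * (N l:ℤ)) := by
        rw [← Finset.sum_sub_distrib]
        refine Finset.sum_congr rfl fun l _ => ?_
        rw [hgc l]; ring
      have C : (n₁:ℤ) * ∑ l : Fin d, (m l:ℤ) * ((b l / c l:ℕ):ℤ)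
          = ∑ l : Fin d, (m l:ℤ) * ((b l:ℤ) * (N l:ℤ)) := by
        rw [Finset.mul_sum]
        refine Finset.sum_congr rfl fun l _ => ?_
        rw [hkeyZ l]; ring
      rw [A, hgl, mul_sub, C]
      linarith
    have hgmem : g ∈ Gα := ⟨hbox, hgeq⟩
    refine ⟨(g, m), ⟨hgmem, by exact hvg⟩, ?_⟩
    rintro ⟨g', m'⟩ ⟨hg'mem, hveq'⟩
    obtain ⟨hbox', heq'⟩ := hg'mem
    have hm' : m' = m := by
      funext j
      have h1 : v (Fin.castSucc j) = g' (Fin.castSucc j) + (m' j:ℤ) * (N j:ℤ) := by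
        rw [hveq', Pi.add_apply, hScs]
      have hbj := hbox' j
      have h2 : ((m' j : ℤ)) = (v (Fin.castSucc j) - 1) / (N j:ℤ) := by
        rw [h1, show g' (Fin.castSucc j) + (m' j:ℤ) * (N j:ℤ) - 1
          = (g' (Fin.castSucc j) - 1) + (m' j:ℤ) * (N j:ℤ) by ring,
          Int.add_mul_ediv_right _ _ (hN0 j).ne',
          Int.ediv_eq_zero_of_lt (by linarith [hbj.1]) (by linarith [hbj.2])]
        ring
      have h3 : (m' j : ℤ) = (m j : ℤ) := by rw [h2, ← hmz j]
      exact_mod_cast h3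
    have hg' : g' = g := by
      have h4 : g' + S = v := by
        rw [hveq', hm', ← hSdef]
      rw [hgdef, ← h4]
      abel
    rw [Prod.mk.injEq]
    exact ⟨hg', hm'⟩
  · -- converse
    rintro g ⟨hbox, heq⟩ m
    rw [hH α]
    have hgl : 0 < g (Fin.last d) := hpos α (Int.natCast_nonneg α) g (fun l => (hbox l).1) heq
    have hA : ∑ l : Fin d, (b l:ℤ)
          * (g + ∑ l : Fin d, (m l : ℤ) • (fun i => (w l i : ℤ))) (Fin.castSucc l)
        = (∑ l : Fin d, (b l:ℤ) * g (Fin.castSucc l))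
          + ∑ l : Fin d, (m l:ℤ) * ((b l:ℤ) * (N l:ℤ)) := by
      rw [← Finset.sum_add_distrib]
      refine Finset.sum_congr rfl fun l _ => ?_
      rw [Pi.add_apply, hScs]; ring
    have hB : (g + ∑ l : Fin d, (m l : ℤ) • (fun i => (w l i : ℤ))) (Fin.last d)
        = g (Fin.last d) + ∑ l : Fin d, (m l:ℤ) * ((b l / c l:ℕ):ℤ) := by
      rw [Pi.add_apply, hSlast]
    have hC : (n₁:ℤ) * ∑ l : Fin d, (m l:ℤ) * ((b l / c l:ℕ):ℤ)
        = ∑ l : Fin d, (m l:ℤ) * ((b l:ℤ) * (N l:ℤ)) := by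
      rw [Finset.mul_sum]
      refine Finset.sum_congr rfl fun l _ => ?_
      rw [hkeyZ l]; ring
    constructor
    · intro i
      refine Fin.lastCases ?_ (fun j => ?_) i
      · rw [hB]
        have : 0 ≤ ∑ l : Fin d, (m l:ℤ) * ((b l / c l:ℕ):ℤ) :=
          Finset.sum_nonneg fun l _ => mul_nonneg (Int.natCast_nonneg _) (Int.natCast_nonneg _)
        linarith
      · rw [Pi.add_apply, hScs]
        have : 0 ≤ (m j:ℤ) * (N j:ℤ) := mul_nonneg (Int.natCast_nonneg _) (le_of_lt (hN0 j))
        linarith [(hbox j).1]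
    · rw [hA, hB, mul_add, hC]
      linarith
end

section
/- Let k be a field, f a nonzero formal power series over k in d variables, and κ ∈ ℝ^d with all coordinates strictly positive. Then the first meet locus F(κ) := {x ∈ Γ(f) : ⟨κ, x⟩ = m_f(κ)} equals the convex hull of the finite set {n ∈ supp(f) : ⟨κ, n⟩ = m_f(κ)}; in particular F(κ) is a nonempty compact subset of Γ(f). -/
/-- The Newton polyhedron of a multivariate formal power series `f`: the convex hull of
`⋃_{n ∈ supp f} (n + ℝ₊^d) ⊆ ℝ^d`. -/
noncomputable def newtonPolyhedron (k : Type*) [Field k] (d : ℕ)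
    (f : MvPowerSeries (Fin d) k) : Set (Fin d → ℝ) :=
  convexHull ℝ {x : Fin d → ℝ | ∃ n : Fin d →₀ ℕ,
    MvPowerSeries.coeff n f ≠ 0 ∧ ∀ i, (n i : ℝ) ≤ x i}

/-- For `f ≠ 0` and `κ` with all coordinates strictly positive, setting
`mf = m_f(κ) = inf {⟨κ, x⟩ : x ∈ Γ(f)}`, the first meet locus
`F(κ) = {x ∈ Γ(f) : ⟨κ, x⟩ = mf}` is the convex hull of the finite set
`{n ∈ supp f : ⟨κ, n⟩ = mf}`; in particular it is a nonempty compact subset of `Γ(f)`. -/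
theorem stmt10 (k : Type*) [Field k] (d : ℕ) (hd : 1 ≤ d)
    (f : MvPowerSeries (Fin d) k) (hf : f ≠ 0)
    (κ : Fin d → ℝ) (hκ : ∀ i, 0 < κ i)
    (mf : ℝ)
    (hmf : mf = sInf ((fun x => ∑ i : Fin d, κ i * x i) '' newtonPolyhedron k d f)) :
    ({x : Fin d → ℝ | x ∈ newtonPolyhedron k d f ∧ ∑ i : Fin d, κ i * x i = mf}
      = convexHull ℝ ((fun n : Fin d →₀ ℕ => (fun i => (n i : ℝ))) ''
          {n : Fin d →₀ ℕ | MvPowerSeries.coeff n f ≠ 0 ∧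
            ∑ i : Fin d, κ i * (n i : ℝ) = mf})) ∧
    {n : Fin d →₀ ℕ | MvPowerSeries.coeff n f ≠ 0 ∧
        ∑ i : Fin d, κ i * (n i : ℝ) = mf}.Finite ∧
    {x : Fin d → ℝ | x ∈ newtonPolyhedron k d f ∧ ∑ i : Fin d, κ i * x i = mf}.Nonempty ∧
    IsCompact {x : Fin d → ℝ | x ∈ newtonPolyhedron k d f ∧
        ∑ i : Fin d, κ i * x i = mf} := by
  classical
  set ℓ : (Fin d → ℝ) → ℝ := fun x => ∑ i : Fin d, κ i * x i with hℓ
  have hlin : IsLinearMap ℝ ℓ := by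
    constructor
    · intro x y
      simp only [ℓ, Pi.add_apply, mul_add, Finset.sum_add_distrib]
    · intro c x
      simp only [ℓ, Pi.smul_apply, smul_eq_mul, Finset.mul_sum, mul_left_comm]
  set S : Set (Fin d → ℝ) := {x : Fin d → ℝ | ∃ n : Fin d →₀ ℕ,
    MvPowerSeries.coeff n f ≠ 0 ∧ ∀ i, (n i : ℝ) ≤ x i} with hS
  have hΓ : newtonPolyhedron k d f = convexHull ℝ S := rfl
  -- support is nonempty
  obtain ⟨n₁, hn₁⟩ : ∃ n, MvPowerSeries.coeff n f ≠ 0 := by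
    by_contra h
    push_neg at h
    exact hf (MvPowerSeries.ext fun n => by simp [h n])
  -- finiteness of sublevel sets of ℓ on ℕ^d
  have hfin : ∀ C : ℝ, {n : Fin d →₀ ℕ | ∑ i : Fin d, κ i * (n i : ℝ) ≤ C}.Finite := by
    intro C
    apply Set.Finite.of_finite_image (f := fun n : Fin d →₀ ℕ => (n : Fin d → ℕ))
    · apply Set.Finite.subset
        (Set.Finite.pi fun i : Fin d => Set.finite_Iic ⌊C / κ i⌋₊)
      rintro g ⟨n, hn, rfl⟩
      intro i _
      have hterm : ∀ j ∈ Finset.univ, 0 ≤ κ j * ((n j : ℝ)) := fun j _ =>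
        mul_nonneg (hκ j).le (Nat.cast_nonneg _)
      have h1 : κ i * (n i : ℝ) ≤ C :=
        le_trans (Finset.single_le_sum hterm (Finset.mem_univ i)) hn
      have h2 : (n i : ℝ) ≤ C / κ i := (le_div_iff₀ (hκ i)).2 (by linarith)
      exact Nat.le_floor h2
    · exact fun a _ b _ h => DFunLike.coe_injective h
  -- the set T of support points with ℓ-value ≤ ℓ(n₁), finite and nonempty
  set ℓ' : (Fin d →₀ ℕ) → ℝ := fun n => ∑ i : Fin d, κ i * (n i : ℝ) with hℓ'
  have hTfin : {n : Fin d →₀ ℕ | MvPowerSeries.coeff n f ≠ 0 ∧ ℓ' n ≤ ℓ' n₁}.Finite :=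
    (hfin (ℓ' n₁)).subset fun n hn => hn.2
  obtain ⟨n₀, hn₀T, hn₀min⟩ :=
    hTfin.toFinset.exists_min_image ℓ'
      ⟨n₁, hTfin.mem_toFinset.2 ⟨hn₁, le_refl _⟩⟩
  rw [hTfin.mem_toFinset] at hn₀T
  set m₀ : ℝ := ℓ' n₀ with hm₀def
  -- m₀ is a lower bound on ℓ' over the support
  have hm₀ : ∀ n : Fin d →₀ ℕ, MvPowerSeries.coeff n f ≠ 0 → m₀ ≤ ℓ' n := by
    intro n hn
    by_cases h : ℓ' n ≤ ℓ' n₁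
    · exact hn₀min n (hTfin.mem_toFinset.2 ⟨hn, h⟩)
    · exact le_trans (hn₀min n₁ (hTfin.mem_toFinset.2 ⟨hn₁, le_refl _⟩)) (le_of_not_ge h)
  -- m₀ is a lower bound on ℓ over S
  have hℓS : ∀ x ∈ S, m₀ ≤ ℓ x := by
    rintro x ⟨n, hn, hnx⟩
    refine le_trans (hm₀ n hn) ?_
    apply Finset.sum_le_sum
    intro i _
    exact mul_le_mul_of_nonneg_left (hnx i) (hκ i).le
  -- m₀ is a lower bound over the Newton polyhedron
  have hℓΓ : ∀ x ∈ newtonPolyhedron k d f, m₀ ≤ ℓ x := by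
    intro x hx
    rw [hΓ] at hx
    exact convexHull_min hℓS (convex_halfSpace_ge hlin m₀) hx
  -- the point x₀ corresponding to n₀
  set x₀ : Fin d → ℝ := fun i => (n₀ i : ℝ) with hx₀def
  have hx₀S : x₀ ∈ S := ⟨n₀, hn₀T.1, fun i => le_refl _⟩
  have hx₀Γ : x₀ ∈ newtonPolyhedron k d f := by rw [hΓ]; exact subset_convexHull ℝ S hx₀S
  have hℓx₀ : ℓ x₀ = m₀ := rfl
  -- mf = m₀
  have hmf' : mf = m₀ := by
    rw [hmf]
    apply le_antisymm
    · exact csInf_le ⟨m₀, by rintro y ⟨x, hx, rfl⟩; exact hℓΓ x hx⟩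
        ⟨x₀, hx₀Γ, hℓx₀⟩
    · exact le_csInf ⟨m₀, x₀, hx₀Γ, hℓx₀⟩ (by rintro y ⟨x, hx, rfl⟩; exact hℓΓ x hx)
  -- the vertex set A
  have hAfin : {n : Fin d →₀ ℕ | MvPowerSeries.coeff n f ≠ 0 ∧
      ∑ i : Fin d, κ i * (n i : ℝ) = mf}.Finite :=
    (hfin mf).subset fun n hn => le_of_eq hn.2
  have hn₀A : n₀ ∈ {n : Fin d →₀ ℕ | MvPowerSeries.coeff n f ≠ 0 ∧
      ∑ i : Fin d, κ i * (n i : ℝ) = mf} := ⟨hn₀T.1, by rw [hmf']⟩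
  have hFx₀ : x₀ ∈ {x : Fin d → ℝ | x ∈ newtonPolyhedron k d f ∧
      ∑ i : Fin d, κ i * x i = mf} := ⟨hx₀Γ, by rw [hmf']⟩
  -- main set equality
  have hmain : {x : Fin d → ℝ | x ∈ newtonPolyhedron k d f ∧ ∑ i : Fin d, κ i * x i = mf}
      = convexHull ℝ ((fun n : Fin d →₀ ℕ => (fun i => (n i : ℝ))) ''
          {n : Fin d →₀ ℕ | MvPowerSeries.coeff n f ≠ 0 ∧
            ∑ i : Fin d, κ i * (n i : ℝ) = mf}) := by
    apply Set.Subset.antisymm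
    · rintro x ⟨hxΓ, hxℓ⟩
      rw [hΓ, convexHull_eq] at hxΓ
      obtain ⟨ι, t, w, z, hw₀, hw₁, hzS, hcm⟩ := hxΓ
      -- ℓ x = ∑ w j * ℓ (z j)
      have hsum : ∑ j ∈ t, w j * ℓ (z j) = mf := by
        have : ℓ x = ∑ j ∈ t, w j * ℓ (z j) := by
          rw [← hcm, Finset.centerMass_eq_of_sum_1 _ _ hw₁]
          rw [show ℓ (∑ j ∈ t, w j • z j) = (hlin.mk' ℓ) (∑ j ∈ t, w j • z j) from rfl]
          rw [map_sum]
          simp [IsLinearMap.mk'_apply]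
        rw [← this]; exact hxℓ
      -- each term with positive weight must achieve the minimum
      have hnn : ∀ j ∈ t, 0 ≤ w j * (ℓ (z j) - m₀) := fun j hj =>
        mul_nonneg (hw₀ j hj) (sub_nonneg.2 (hℓS (z j) (hzS j hj)))
      have htotal : ∑ j ∈ t, w j * (ℓ (z j) - m₀) = 0 := by
        simp only [mul_sub]
        rw [Finset.sum_sub_distrib, hsum, ← Finset.sum_mul, hw₁, one_mul, hmf', sub_self]
      have hzero : ∀ j ∈ t, w j * (ℓ (z j) - m₀) = 0 :=
        (Finset.sum_eq_zero_iff_of_nonneg hnn).1 htotal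
      -- points with positive weight lie in the vertex set
      set t' := t.filter (fun j => w j ≠ 0) with ht'
      have ht'sub : t' ⊆ t := Finset.filter_subset _ _
      have hzA : ∀ j ∈ t', z j ∈ ((fun n : Fin d →₀ ℕ => (fun i => (n i : ℝ))) ''
          {n : Fin d →₀ ℕ | MvPowerSeries.coeff n f ≠ 0 ∧
            ∑ i : Fin d, κ i * (n i : ℝ) = mf}) := by
        intro j hj
        rw [ht', Finset.mem_filter] at hj
        obtain ⟨hjt, hjw⟩ := hj
        have hℓzj : ℓ (z j) = m₀ := by
          have := hzero j hjt
          rcases mul_eq_zero.1 this with h | h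
          · exact absurd h hjw
          · linarith [sub_eq_zero.1 h]
        obtain ⟨n, hn, hnz⟩ := hzS j hjt
        -- ℓ' n ≤ ℓ (z j) termwise, and ℓ' n ≥ m₀, so both equal m₀ and z j = n
        have hterm : ∀ i ∈ Finset.univ, κ i * (n i : ℝ) ≤ κ i * z j i := fun i _ =>
          mul_le_mul_of_nonneg_left (hnz i) (hκ i).le
        have hle : ℓ' n ≤ ℓ (z j) := Finset.sum_le_sum hterm
        have hℓ'n : ℓ' n = m₀ := le_antisymm (hℓzj ▸ hle) (hm₀ n hn)
        have heq : ∀ i, (n i : ℝ) = z j i := by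
          have hsz : ∑ i : Fin d, (κ i * z j i - κ i * (n i : ℝ)) = 0 := by
            rw [Finset.sum_sub_distrib]
            change ℓ (z j) - ℓ' n = 0
            rw [hℓzj, hℓ'n, sub_self]
          have hall := (Finset.sum_eq_zero_iff_of_nonneg
            (fun i (_ : i ∈ Finset.univ) => sub_nonneg.2 (hterm i (Finset.mem_univ i)))).1 hsz
          intro i
          have := hall i (Finset.mem_univ i)
          have hki := (hκ i).ne'
          have : κ i * z j i = κ i * (n i : ℝ) := by linarith [sub_eq_zero.1 this]
          exact (mul_left_cancel₀ hki this.symm)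
        exact ⟨n, ⟨hn, by rw [hmf']; exact hℓ'n⟩, by funext i; exact heq i⟩
      -- conclude via center of mass over t'
      have hx' : x = t'.centerMass w z := by
        rw [← hcm, ht']
        exact (Finset.centerMass_filter_ne_zero z).symm
      rw [hx']
      apply Finset.centerMass_mem_convexHull
      · exact fun j hj => hw₀ j (ht'sub hj)
      · rw [ht', Finset.sum_filter_ne_zero, hw₁]; exact one_pos
      · exact hzA
    · apply convexHull_min
      · rintro x ⟨n, hn, rfl⟩
        refine ⟨hΓ ▸ subset_convexHull ℝ S ⟨n, hn.1, fun i => le_refl _⟩, hn.2⟩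
      · exact Convex.inter (hΓ ▸ convex_convexHull ℝ S)
          (convex_hyperplane hlin mf)
  refine ⟨hmain, hAfin, ⟨x₀, hFx₀⟩, ?_⟩
  rw [hmain]
  exact (hAfin.image _).isCompact_convexHull ℝ
end
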